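/- arXiv:2205.12167 — 3 statements merged into one kernel-verified Lean document; each statement's English description precedes it below -/
import Mathlib

section
/- Let Φ : [t0,T] × [t0,T] × ℝ → ℝ be a function such that for every (s,x) ∈ [t0,T] × ℝ, the map t ↦ Φ(t,s,x) is a Carathéodory solution with data (s,x). Then the map (t,s,x) ↦ Φ(t,s,x) is continuous on [t0,T] × [t0,T] × ℝ. -/
/-!
Two solutions φ, ψ with the same initial time `s` satisfy
`|φ t - ψ t| ≤ |φ s - ψ s| + L |∫ₛᵗ |φ - ψ||`, so Grönwall's inequality (forwards, and after
reflecting time also backwards) gives `|φ t - ψ t| ≤ |φ s - ψ s| e^{L |t - s|}`. A solution with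
data `(s', x')` is also a solution with data `(s, Φ(s, s', x'))`, and
`|Φ(s, s', x') - x'| ≤ m |s - s'|` since `|G| ≤ m`. Together with the same bound in `t`, this
makes the flow Lipschitz in `(t, s, x)`.
-/

open MeasureTheory Set

/-- A Carathéodory solution on `[t0, T]` with data `(s, x)`. -/
def IsCaratheodorySol (t0 T : ℝ) (G : ℝ → ℝ → ℝ) (s x : ℝ) (Φ : ℝ → ℝ) : Prop :=
  ContinuousOn Φ (Icc t0 T) ∧
    ∀ t ∈ Icc t0 T, Φ t = x + ∫ r in s..t, G r (Φ r)

open Filter Topology Real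

theorem le_mul_exp_of_le_add_mul_integral {u : ℝ → ℝ} {a b δ L : ℝ}
    (hu : ContinuousOn u (Icc a b)) (hL : 0 ≤ L)
    (h : ∀ t ∈ Icc a b, u t ≤ δ + L * ∫ r in a..t, u r) :
    ∀ t ∈ Icc a b, u t ≤ δ * exp (L * (t - a)) := by
  intro t ht
  have hab : a ≤ b := ht.1.trans ht.2
  set f : ℝ → ℝ := fun t => δ + L * ∫ r in a..t, u r
  have hint : IntegrableOn u (Icc a b) := hu.integrableOn_Icc
  have hf : ContinuousOn f (Icc a b) := by
    have hprim := intervalIntegral.continuousOn_primitive_interval (μ := volume) (a := a)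
      (b := b) (by rwa [uIcc_of_le hab])
    rw [uIcc_of_le hab] at hprim
    exact continuousOn_const.add (continuousOn_const.mul hprim)
  have hf' : ∀ r ∈ Ico a b, HasDerivWithinAt f (L * u r) (Ici r) r := by
    intro r hr
    have hmem : Icc a b ∈ 𝓝[>] r := Icc_mem_nhdsGT_of_mem hr
    have hFTC := intervalIntegral.integral_hasDerivWithinAt_right (s := Ici r) (t := Ioi r)
      (hint.mono_set
        (uIcc_subset_Icc (left_mem_Icc.2 hab) (Ico_subset_Icc_self hr))).intervalIntegrable
      ((hu.stronglyMeasurableAtFilter_nhdsWithin measurableSet_Icc r).filter_mono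
        (nhdsWithin_le_of_mem hmem))
      ((hu r (Ico_subset_Icc_self hr)).mono_of_mem_nhdsWithin hmem)
    exact (hFTC.const_mul L).const_add δ
  have hgr := le_gronwallBound_of_liminf_deriv_right_le (δ := δ) (K := L) (ε := 0) hf
    (fun r hr _ hlt => (hf' r hr).liminf_right_slope_le hlt) (by simp [f])
    (fun r hr => by simpa using mul_le_mul_of_nonneg_left (h r (Ico_subset_Icc_self hr)) hL)
    t ht
  rw [gronwallBound_ε0] at hgr
  exact (h t ht).trans hgr

theorem le_mul_exp_abs_of_le_add_mul_abs_integral {u : ℝ → ℝ} {a b s δ L : ℝ}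
    (hu : ContinuousOn u (Icc a b)) (hu0 : ∀ t ∈ Icc a b, 0 ≤ u t) (hL : 0 ≤ L)
    (hs : s ∈ Icc a b) (h : ∀ t ∈ Icc a b, u t ≤ δ + L * |∫ r in s..t, u r|) :
    ∀ t ∈ Icc a b, u t ≤ δ * exp (L * |t - s|) := by
  have hint_nonneg : ∀ {c d}, c ∈ Icc a b → d ∈ Icc a b → c ≤ d → 0 ≤ ∫ r in c..d, u r :=
    fun hc hd hcd => intervalIntegral.integral_nonneg hcd fun r hr =>
      hu0 r ⟨hc.1.trans hr.1, hr.2.trans hd.2⟩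
  intro t ht
  rcases le_total s t with hst | hts
  · have hfwd := le_mul_exp_of_le_add_mul_integral (hu.mono (Icc_subset_Icc_left hs.1)) hL
      (fun r hr => by
        have hr' : r ∈ Icc a b := ⟨hs.1.trans hr.1, hr.2⟩
        simpa only [abs_of_nonneg (hint_nonneg hs hr' hr.1)] using h r hr')
      t ⟨hst, ht.2⟩
    rwa [abs_of_nonneg (sub_nonneg.2 hst)]
  · have hbwd := le_mul_exp_of_le_add_mul_integral (u := fun τ => u (-τ)) (a := -s) (b := -a)
      (hu.comp continuousOn_neg fun τ hτ => ⟨le_neg.1 hτ.2, (neg_le.1 hτ.1).trans hs.2⟩) hL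
      (fun τ hτ => by
        have hτ' : -τ ∈ Icc a b := ⟨le_neg.1 hτ.2, (neg_le.1 hτ.1).trans hs.2⟩
        have := h (-τ) hτ'
        rwa [intervalIntegral.integral_symm, abs_neg,
          abs_of_nonneg (hint_nonneg hτ' hs (neg_le.1 hτ.1)), ← neg_neg s,
          ← intervalIntegral.integral_comp_neg] at this)
      (-t) ⟨neg_le_neg hts, neg_le_neg ht.1⟩
    rw [abs_sub_comm, abs_of_nonneg (sub_nonneg.2 hts)]
    simpa only [neg_neg, neg_sub_neg] using hbwd

section Caratheodory

variable {α : Type*} [MeasurableSpace α] {μ : Measure α} {s : Set α} {G : α → ℝ → ℝ}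
  {φ : α → ℝ}

theorem aemeasurable_comp_of_measurable_of_continuous (hs : MeasurableSet s)
    (hmeas : ∀ x, Measurable fun t => G t x) (hcont : ∀ t ∈ s, Continuous (G t))
    (hφ : AEMeasurable φ (μ.restrict s)) :
    AEMeasurable (fun t => G t (φ t)) (μ.restrict s) := by
  -- outside `s`, `G` is replaced by `0` so that it is continuous in `x` for every `t`
  have hjoint : Measurable (Function.uncurry fun x t => s.indicator (fun t => G t x) t) := by
    refine measurable_uncurry_of_continuous_of_measurable (fun t => ?_)
      (fun x => (hmeas x).indicator hs)
    by_cases ht : t ∈ s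
    · simpa only [indicator_of_mem ht] using hcont t ht
    · simpa only [indicator_of_notMem ht] using continuous_const
  refine (hjoint.comp_aemeasurable (hφ.prodMk aemeasurable_id)).congr ?_
  filter_upwards [ae_restrict_mem hs] with t ht
  exact indicator_of_mem ht fun t' => G t' (φ t)

theorem integrableOn_comp_of_measurable_of_continuous (hs : MeasurableSet s) (hμs : μ s < ⊤)
    (hmeas : ∀ x, Measurable fun t => G t x) (hcont : ∀ t ∈ s, Continuous (G t))
    {m : ℝ} (hbound : ∀ t ∈ s, ∀ x, |G t x| ≤ m) (hφ : AEMeasurable φ (μ.restrict s)) :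
    IntegrableOn (fun t => G t (φ t)) s μ := by
  refine .of_bound hμs
    (aemeasurable_comp_of_measurable_of_continuous hs hmeas hcont hφ).aestronglyMeasurable m ?_
  filter_upwards [ae_restrict_mem hs] with t ht
  exact hbound t ht (φ t)

end Caratheodory

namespace IsCaratheodorySol

variable {t0 T : ℝ} {G : ℝ → ℝ → ℝ} {s x : ℝ} {φ : ℝ → ℝ}

theorem restart (hφ : IsCaratheodorySol t0 T G s x φ) (hs : s ∈ Icc t0 T)
    (hint : IntegrableOn (fun r => G r (φ r)) (Icc t0 T)) {s' : ℝ} (hs' : s' ∈ Icc t0 T) :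
    IsCaratheodorySol t0 T G s' (φ s') φ := by
  refine ⟨hφ.1, fun t ht => ?_⟩
  rw [hφ.2 t ht, hφ.2 s' hs', add_assoc,
    intervalIntegral.integral_add_adjacent_intervals
      (hint.mono_set (uIcc_subset_Icc hs hs')).intervalIntegrable
      (hint.mono_set (uIcc_subset_Icc hs' ht)).intervalIntegrable]

theorem abs_sub_le_mul (hφ : IsCaratheodorySol t0 T G s x φ) (hs : s ∈ Icc t0 T)
    (hint : IntegrableOn (fun r => G r (φ r)) (Icc t0 T)) {m : ℝ}
    (hbound : ∀ t ∈ Icc t0 T, ∀ x, |G t x| ≤ m) {a b : ℝ} (ha : a ∈ Icc t0 T)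
    (hb : b ∈ Icc t0 T) :
    |φ a - φ b| ≤ m * |a - b| := by
  rw [(hφ.restart hs hint hb).2 a ha, add_sub_cancel_left]
  exact intervalIntegral.norm_integral_le_of_norm_le_const (f := fun r => G r (φ r)) fun r hr =>
    hbound r (uIcc_subset_Icc hb ha (uIoc_subset_uIcc hr)) (φ r)

theorem abs_sub_le_mul_exp {y : ℝ} {ψ : ℝ → ℝ} (hφ : IsCaratheodorySol t0 T G s x φ)
    (hψ : IsCaratheodorySol t0 T G s y ψ) (hs : s ∈ Icc t0 T)
    (hintφ : IntegrableOn (fun r => G r (φ r)) (Icc t0 T))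
    (hintψ : IntegrableOn (fun r => G r (ψ r)) (Icc t0 T)) {L : ℝ} (hL : 0 ≤ L)
    (hlip : ∀ t ∈ Icc t0 T, ∀ x y : ℝ, |G t x - G t y| ≤ L * |x - y|) :
    ∀ t ∈ Icc t0 T, |φ t - ψ t| ≤ |x - y| * exp (L * |t - s|) := by
  have hu : ContinuousOn (fun t => |φ t - ψ t|) (Icc t0 T) := (hφ.1.sub hψ.1).abs
  refine le_mul_exp_abs_of_le_add_mul_abs_integral hu (fun _ _ => abs_nonneg _) hL hs
    fun t ht => ?_
  have hst : uIcc s t ⊆ Icc t0 T := uIcc_subset_Icc hs ht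
  have hdiff : φ t - ψ t = (x - y) + ∫ r in s..t, (G r (φ r) - G r (ψ r)) := by
    rw [hφ.2 t ht, hψ.2 t ht, intervalIntegral.integral_sub
      (hintφ.mono_set hst).intervalIntegrable (hintψ.mono_set hst).intervalIntegrable]
    ring
  have hlipint :
      |∫ r in s..t, (G r (φ r) - G r (ψ r))| ≤ L * |(∫ r in s..t, |φ r - ψ r|)| := by
    have := intervalIntegral.norm_integral_le_abs_of_norm_le (g := fun r => L * |φ r - ψ r|)
      (f := fun r => G r (φ r) - G r (ψ r))
      (ae_restrict_of_forall_mem measurableSet_uIoc fun r hr =>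
        hlip r (hst (uIoc_subset_uIcc hr)) (φ r) (ψ r))
      ((continuousOn_const.mul hu).integrableOn_Icc (μ := volume)
        |>.mono_set hst).intervalIntegrable
    rwa [intervalIntegral.integral_const_mul, abs_mul, abs_of_nonneg hL] at this
  calc |φ t - ψ t| ≤ |x - y| + |∫ r in s..t, (G r (φ r) - G r (ψ r))| := by
        rw [hdiff]; exact abs_add_le _ _
    _ ≤ |x - y| + L * |(∫ r in s..t, |φ r - ψ r|)| := by gcongr

theorem abs_sub_le_add_mul_exp {s' x' : ℝ} {ψ : ℝ → ℝ} (hφ : IsCaratheodorySol t0 T G s x φ)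
    (hψ : IsCaratheodorySol t0 T G s' x' ψ) (hs : s ∈ Icc t0 T) (hs' : s' ∈ Icc t0 T)
    (hintφ : IntegrableOn (fun r => G r (φ r)) (Icc t0 T))
    (hintψ : IntegrableOn (fun r => G r (ψ r)) (Icc t0 T)) {m : ℝ}
    (hbound : ∀ t ∈ Icc t0 T, ∀ x, |G t x| ≤ m) {L : ℝ} (hL : 0 ≤ L)
    (hlip : ∀ t ∈ Icc t0 T, ∀ x y : ℝ, |G t x - G t y| ≤ L * |x - y|) {t : ℝ}
    (ht : t ∈ Icc t0 T) :
    |φ t - ψ t| ≤ (|x - x'| + m * |s - s'|) * exp (L * (T - t0)) := by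
  have hψs' : ψ s' = x' := by simpa using hψ.2 s' hs'
  have hjump : |x - ψ s| ≤ |x - x'| + m * |s - s'| := by
    calc |x - ψ s| ≤ |x - x'| + |ψ s' - ψ s| := hψs' ▸ abs_sub_le x (ψ s') (ψ s)
      _ ≤ |x - x'| + m * |s - s'| := by
        rw [abs_sub_comm s]; gcongr; exact hψ.abs_sub_le_mul hs' hintψ hbound hs' hs
  calc |φ t - ψ t| ≤ |x - ψ s| * exp (L * |t - s|) :=
        hφ.abs_sub_le_mul_exp (hψ.restart hs' hintψ hs) hs hintφ hintψ hL hlip t ht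
    _ ≤ (|x - x'| + m * |s - s'|) * exp (L * (T - t0)) := by
        refine mul_le_mul hjump ?_ (exp_pos _).le ((abs_nonneg _).trans hjump)
        gcongr
        exact Real.dist_le_of_mem_Icc ht hs

end IsCaratheodorySol

theorem caratheodory_flow_continuous_general
    (t0 T : ℝ) (G : ℝ → ℝ → ℝ)
    (hmeas : ∀ x : ℝ, Measurable fun t => G t x)
    (m : ℝ) (hm : 0 ≤ m) (hbound : ∀ t ∈ Icc t0 T, ∀ x : ℝ, |G t x| ≤ m)
    (L : ℝ) (hL : 0 ≤ L)
    (hlip : ∀ t ∈ Icc t0 T, ∀ x y : ℝ, |G t x - G t y| ≤ L * |x - y|)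
    (Φ : ℝ → ℝ → ℝ → ℝ)
    (hΦ : ∀ s ∈ Icc t0 T, ∀ x : ℝ, IsCaratheodorySol t0 T G s x (fun t => Φ t s x)) :
    ContinuousOn (fun p : ℝ × ℝ × ℝ => Φ p.1 p.2.1 p.2.2)
      (Icc t0 T ×ˢ Icc t0 T ×ˢ (univ : Set ℝ)) := by
  have hcont : ∀ t ∈ Icc t0 T, Continuous (G t) := fun t ht =>
    (LipschitzWith.of_dist_le' fun x y => hlip t ht x y).continuous
  have hint : ∀ s ∈ Icc t0 T, ∀ x, IntegrableOn (fun r => G r (Φ r s x)) (Icc t0 T) :=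
    fun s hs x => integrableOn_comp_of_measurable_of_continuous measurableSet_Icc
      measure_Icc_lt_top hmeas hcont hbound ((hΦ s hs x).1.aemeasurable measurableSet_Icc)
  set C := exp (L * (T - t0))
  refine (LipschitzOnWith.of_dist_le' (K := m + (1 + m) * C) ?_).continuousOn
  rintro ⟨t, s, x⟩ ⟨ht, hs, -⟩ ⟨t', s', x'⟩ ⟨ht', hs', -⟩
  set d := dist (t, s, x) (t', s', x')
  have hdt : |t - t'| ≤ d := le_max_left _ _
  have hds : |s - s'| ≤ d := (le_max_left _ _).trans (le_max_right _ _)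
  have hdx : |x - x'| ≤ d := (le_max_right _ _).trans (le_max_right _ _)
  calc |Φ t s x - Φ t' s' x'| ≤ |Φ t s x - Φ t' s x| + |Φ t' s x - Φ t' s' x'| :=
        abs_sub_le _ _ _
    _ ≤ m * |t - t'| + (|x - x'| + m * |s - s'|) * C :=
        add_le_add ((hΦ s hs x).abs_sub_le_mul hs (hint s hs x) hbound ht ht')
          ((hΦ s hs x).abs_sub_le_add_mul_exp (hΦ s' hs' x') hs hs' (hint s hs x) (hint s' hs' x')
            hbound hL hlip ht')
    _ ≤ m * d + (d + m * d) * C := by gcongr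
    _ = (m + (1 + m) * C) * d := by ring

/-- Joint continuity of the Carathéodory flow `(t, s, x) ↦ Φ(t, s, x)` on
`[t0, T] × [t0, T] × ℝ`. -/
theorem caratheodory_flow_continuous
    (t0 T : ℝ) (ht : t0 < T) (G : ℝ → ℝ → ℝ)
    (hmeas : ∀ x : ℝ, Measurable fun t => G t x)
    (m : ℝ) (hm : 0 ≤ m) (hbound : ∀ t ∈ Icc t0 T, ∀ x : ℝ, |G t x| ≤ m)
    (L : ℝ) (hL : 0 ≤ L)
    (hlip : ∀ t ∈ Icc t0 T, ∀ x y : ℝ, |G t x - G t y| ≤ L * |x - y|)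
    (Φ : ℝ → ℝ → ℝ → ℝ)
    (hΦ : ∀ s ∈ Icc t0 T, ∀ x : ℝ, IsCaratheodorySol t0 T G s x (fun t => Φ t s x)) :
    ContinuousOn (fun p : ℝ × ℝ × ℝ => Φ p.1 p.2.1 p.2.2)
      (Icc t0 T ×ˢ Icc t0 T ×ˢ (univ : Set ℝ)) :=
  caratheodory_flow_continuous_general t0 T G hmeas m hm hbound L hL hlip Φ hΦ
end

section
/- Let Φ : [t0,T] × [t0,T] × ℝ → ℝ be a function such that for every (s,x), the map t ↦ Φ(t,s,x) is a Carathéodory solution with data (s,x), and assume G(r,1) > 0 for every r ∈ [t0,T]. For (t,x) with t ∈ [t0,T] and 1 ≤ x ≤ Φ(t,t0,1), let φ(t,x) denote the unique s ∈ [t0,t] with Φ(s,t,x) = 1. Then φ is constant along characteristic curves: for every σ ∈ [t0,T] such that 1 ≤ Φ(σ,t,x) ≤ Φ(σ,t0,1), one has φ(σ, Φ(σ,t,x)) = φ(t,x). -/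
open MeasureTheory Set

/-! Solutions of `x' = G(t, x)` are unique by Grönwall's inequality, so `Φ(·, σ, Φ(σ, t, x))` and
`Φ(·, t, x)` are the same characteristic, and both entry times are times at which it equals `1`.
A characteristic meets the level `1` at most once: once at a level `c` with `G(·, c) ≥ 0` it cannot
drop below `c` (Grönwall from the last time it was at `c`); if it comes back to `c` it stays at `c`
in between (Grönwall backwards from the return time); and it cannot stay at `c` while
`G(·, c) > 0`. -/

open intervalIntegral
open scoped Interval Topology

theorem norm_integral_le_abs_integral_of_norm_le {E : Type*} [NormedAddCommGroup E]
    [NormedSpace ℝ E] {f : ℝ → E} {g : ℝ → ℝ} {a b : ℝ} (h : ∀ t ∈ Ι a b, ‖f t‖ ≤ g t)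
    (hg : IntervalIntegrable g volume a b) : ‖∫ t in a..b, f t‖ ≤ |∫ t in a..b, g t| := by
  rw [norm_integral_eq_norm_integral_uIoc, abs_integral_eq_abs_integral_uIoc]
  exact (MeasureTheory.norm_integral_le_of_norm_le hg.def'
    (ae_restrict_of_forall_mem measurableSet_uIoc h)).trans (le_abs_self _)

section Gronwall

variable {a b c L : ℝ} {g : ℝ → ℝ}

theorem eqOn_zero_of_le_mul_abs_integral_left (hg : ContinuousOn g (Icc a b))
    (hg0 : ∀ ρ ∈ Icc a b, 0 ≤ g ρ) (hle : ∀ ρ ∈ Icc a b, g ρ ≤ L * |∫ r in a..ρ, g r|) :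
    EqOn g 0 (Icc a b) := by
  intro ρ hρ
  have hab : a ≤ b := hρ.1.trans hρ.2
  have hprim : ContinuousOn (fun u => ∫ r in a..u, g r) (Icc a b) := by
    have hint : IntegrableOn g (uIcc a b) := by
      rw [uIcc_of_le hab]; exact hg.integrableOn_Icc
    rw [← uIcc_of_le hab]
    exact continuousOn_primitive_interval hint
  have hderiv : ∀ u ∈ Ico a b,
      HasDerivWithinAt (fun u => ∫ r in a..u, g r) (g u) (Ici u) u := by
    intro u hu
    have hnhds : Icc a b ∈ 𝓝[>] u := Icc_mem_nhdsGT_of_mem ⟨hu.1, hu.2⟩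
    refine integral_hasDerivWithinAt_right
      ((hg.mono (Icc_subset_Icc_right hu.2.le)).intervalIntegrable_of_Icc hu.1)
      ((hg.stronglyMeasurableAtFilter_nhdsWithin measurableSet_Icc u).filter_mono
        (nhdsWithin_le_of_mem hnhds)) ?_
    exact (hg.continuousWithinAt ⟨hu.1, hu.2.le⟩).mono_of_mem_nhdsWithin hnhds
  have hprim0 := eq_zero_of_abs_deriv_le_mul_abs_self_of_eq_zero_right (K := |L|) hprim hderiv
    integral_same fun u hu => by
      rw [Real.norm_eq_abs, abs_of_nonneg (hg0 u (Ico_subset_Icc_self hu)), Real.norm_eq_abs]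
      exact (hle u (Ico_subset_Icc_self hu)).trans (mul_le_mul_of_nonneg_right (le_abs_self L)
        (abs_nonneg _))
  exact le_antisymm (by simpa [hprim0 ρ hρ] using hle ρ hρ) (hg0 ρ hρ)

theorem eqOn_zero_of_le_mul_abs_integral (hg : ContinuousOn g (Icc a b))
    (hg0 : ∀ ρ ∈ Icc a b, 0 ≤ g ρ) (hc : c ∈ Icc a b)
    (hle : ∀ ρ ∈ Icc a b, g ρ ≤ L * |∫ r in c..ρ, g r|) :
    EqOn g 0 (Icc a b) := by
  have hright : EqOn g 0 (Icc c b) :=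
    eqOn_zero_of_le_mul_abs_integral_left (hg.mono (Icc_subset_Icc_left hc.1))
      (fun ρ hρ => hg0 ρ ⟨hc.1.trans hρ.1, hρ.2⟩) fun ρ hρ => hle ρ ⟨hc.1.trans hρ.1, hρ.2⟩
  -- reflecting `[a, c]` by `τ ↦ a + c - τ` turns the integral from `c` into one from `a`
  have hreflect : ∀ τ ∈ Icc a c, a + c - τ ∈ Icc a b := fun τ hτ =>
    ⟨by linarith [hτ.2], by linarith [hτ.1, hc.2]⟩
  have hleft : EqOn (fun τ => g (a + c - τ)) 0 (Icc a c) := by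
    refine eqOn_zero_of_le_mul_abs_integral_left (L := L)
      (hg.comp (by fun_prop) hreflect) (fun τ hτ => hg0 _ (hreflect τ hτ)) fun τ hτ => ?_
    rw [integral_comp_sub_left (fun r => g r), add_sub_cancel_left, integral_symm, abs_neg]
    exact hle _ (hreflect τ hτ)
  intro ρ hρ
  rcases le_total c ρ with hcρ | hρc
  · exact hright ⟨hcρ, hρ.2⟩
  · simpa using hleft (x := a + c - ρ) ⟨by linarith, by linarith [hρ.1]⟩

end Gronwall

structure IsCaratheodoryField (t0 T : ℝ) (G : ℝ → ℝ → ℝ) (m L : ℝ) : Prop where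
  measurable : ∀ x, Measurable fun t => G t x
  abs_le : ∀ t ∈ Icc t0 T, ∀ x, |G t x| ≤ m
  abs_sub_le : ∀ t ∈ Icc t0 T, ∀ x y, |G t x - G t y| ≤ L * |x - y|

namespace IsCaratheodoryField

variable {t0 T m L : ℝ} {G : ℝ → ℝ → ℝ}

theorem continuous (hG : IsCaratheodoryField t0 T G m L) {t : ℝ} (ht : t ∈ Icc t0 T) :
    Continuous (G t) :=
  (LipschitzWith.of_dist_le_mul fun x y => by
    simpa only [Real.dist_eq] using (hG.abs_sub_le t ht x y).trans
      (mul_le_mul_of_nonneg_right (Real.le_coe_toNNReal L) (abs_nonneg _))).continuous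

theorem intervalIntegrable_comp (hG : IsCaratheodoryField t0 T G m L) {γ : ℝ → ℝ}
    (hγ : ContinuousOn γ (Icc t0 T)) {a b : ℝ} (ha : a ∈ Icc t0 T) (hb : b ∈ Icc t0 T) :
    IntervalIntegrable (fun r => G r (γ r)) volume a b := by
  have hle : t0 ≤ T := ha.1.trans ha.2
  -- clamping time to `[t0, T]` gives a field that is Carathéodory on all of `ℝ`
  set p : ℝ → ℝ := fun r => projIcc t0 T hle r
  have hp : Continuous p := continuous_subtype_val.comp continuous_projIcc
  have hF : Measurable fun r => G (p r) (γ (p r)) :=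
    (measurable_uncurry_of_continuous_of_measurable (u := fun x r => G (p r) x)
      (fun r => hG.continuous (projIcc t0 T hle r).2)
      (fun x => (hG.measurable x).comp hp.measurable)).comp
      ((hγ.comp_continuous hp fun r => (projIcc t0 T hle r).2).measurable.prodMk measurable_id)
  have hsub : Ι a b ⊆ Icc t0 T := uIoc_subset_uIcc.trans (uIcc_subset_Icc ha hb)
  refine (intervalIntegrable_iff.2 (Measure.integrableOn_of_bounded measure_Ioc_lt_top.ne
    hF.aestronglyMeasurable (M := m) (ae_of_all _ fun r => ?_))).congr ?_
  · exact hG.abs_le _ (projIcc t0 T hle r).2 _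
  · intro r hr
    simp only [p, projIcc_of_mem hle (hsub hr)]

theorem neg_mul_abs_sub_le (hG : IsCaratheodoryField t0 T G m L) {t c : ℝ} (ht : t ∈ Icc t0 T)
    (hGc : 0 ≤ G t c) (x : ℝ) : -(L * |x - c|) ≤ G t x := by
  linarith [neg_abs_le (G t x - G t c), hG.abs_sub_le t ht x c]

end IsCaratheodoryField

namespace IsCaratheodorySol

variable {t0 T m L s x : ℝ} {G : ℝ → ℝ → ℝ} {γ : ℝ → ℝ}

theorem apply_self (hγ : IsCaratheodorySol t0 T G s x γ) (hs : s ∈ Icc t0 T) : γ s = x := by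
  simpa using hγ.2 s hs

theorem restart_s10 (hG : IsCaratheodoryField t0 T G m L) (hγ : IsCaratheodorySol t0 T G s x γ)
    (hs : s ∈ Icc t0 T) {σ : ℝ} (hσ : σ ∈ Icc t0 T) : IsCaratheodorySol t0 T G σ (γ σ) γ := by
  refine ⟨hγ.1, fun t ht => ?_⟩
  rw [← integral_interval_sub_left (hG.intervalIntegrable_comp hγ.1 hs ht)
    (hG.intervalIntegrable_comp hγ.1 hs hσ), hγ.2 t ht, hγ.2 σ hσ]
  ring

theorem eqOn (hG : IsCaratheodoryField t0 T G m L) {γ₁ γ₂ : ℝ → ℝ}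
    (hγ₁ : IsCaratheodorySol t0 T G s x γ₁) (hγ₂ : IsCaratheodorySol t0 T G s x γ₂)
    (hs : s ∈ Icc t0 T) : EqOn γ₁ γ₂ (Icc t0 T) := by
  have hdist : ContinuousOn (fun r => |γ₁ r - γ₂ r|) (Icc t0 T) := (hγ₁.1.sub hγ₂.1).abs
  have hzero := eqOn_zero_of_le_mul_abs_integral (L := |L|) hdist (fun _ _ => abs_nonneg _) hs
    fun ρ hρ => by
      have hsub : Ι s ρ ⊆ Icc t0 T := uIoc_subset_uIcc.trans (uIcc_subset_Icc hs hρ)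
      rw [hγ₁.2 ρ hρ, hγ₂.2 ρ hρ, add_sub_add_left_eq_sub,
        ← integral_sub (hG.intervalIntegrable_comp hγ₁.1 hs hρ)
          (hG.intervalIntegrable_comp hγ₂.1 hs hρ), ← abs_mul,
        ← intervalIntegral.integral_const_mul]
      exact norm_integral_le_abs_integral_of_norm_le
        (f := fun r => G r (γ₁ r) - G r (γ₂ r)) (g := fun r => L * |γ₁ r - γ₂ r|)
        (fun r hr => hG.abs_sub_le r (hsub hr) _ _)
        ((continuousOn_const.mul hdist).mono (uIcc_subset_Icc hs hρ)).intervalIntegrable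
  exact fun r hr => sub_eq_zero.1 (abs_eq_zero.1 (hzero hr))

theorem le_apply_of_nonneg (hG : IsCaratheodoryField t0 T G m L) {a c : ℝ}
    (hGc : ∀ r ∈ Icc t0 T, 0 ≤ G r c) (hγ : IsCaratheodorySol t0 T G a c γ) (ha : a ∈ Icc t0 T)
    {r₀ : ℝ} (hr₀ : r₀ ∈ Icc a T) : c ≤ γ r₀ := by
  by_contra! hlt
  have hIcc : Icc a r₀ ⊆ Icc t0 T := Icc_subset_Icc ha.1 hr₀.2
  obtain ⟨r₁, ⟨⟨hr₁a, hr₁r₀⟩, hγr₁ : γ r₁ = c⟩, hlast⟩ :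
      ∃ r₁, IsGreatest (Icc a r₀ ∩ γ ⁻¹' {c}) r₁ :=
    (isCompact_Icc.of_isClosed_subset ((hγ.1.mono hIcc).preimage_isClosed_of_isClosed
      isClosed_Icc isClosed_singleton) inter_subset_left).exists_isGreatest
      ⟨a, ⟨le_rfl, hr₀.1⟩, hγ.apply_self ha⟩
  have hsub : Icc r₁ r₀ ⊆ Icc t0 T := (Icc_subset_Icc_left hr₁a).trans hIcc
  have hbelow : ∀ r ∈ Icc r₁ r₀, γ r ≤ c := by
    intro r hr
    by_contra! hgt
    obtain ⟨d, hd, hγd⟩ : c ∈ γ '' Icc r r₀ :=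
      intermediate_value_Icc' hr.2 (hγ.1.mono ((Icc_subset_Icc_left hr.1).trans hsub))
        ⟨hlt.le, hgt.le⟩
    have hdr₁ : d ≤ r₁ := hlast ⟨⟨hr₁a.trans (hr.1.trans hd.1), hd.2⟩, hγd⟩
    obtain rfl : r = r₁ := by linarith [hd.1, hr.1]
    exact hgt.ne' hγr₁
  have hγ' := hγr₁ ▸ hγ.restart_s10 hG ha (hsub ⟨le_rfl, hr₁r₀⟩)
  have hzero := eqOn_zero_of_le_mul_abs_integral_left (L := L) (g := fun r => c - γ r)
    ((continuousOn_const.sub hγ.1).mono hsub) (fun ρ hρ => sub_nonneg.2 (hbelow ρ hρ))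
    fun ρ hρ => by
      have hρsub : Icc r₁ ρ ⊆ Icc t0 T := (Icc_subset_Icc_right hρ.2).trans hsub
      have hbelow' : ∀ r ∈ Icc r₁ ρ, γ r ≤ c := fun r hr => hbelow r ⟨hr.1, hr.2.trans hρ.2⟩
      rw [abs_of_nonneg (integral_nonneg hρ.1 fun r hr => sub_nonneg.2 (hbelow' r hr)),
        ← intervalIntegral.integral_const_mul, hγ'.2 ρ (hsub hρ), sub_add_cancel_left,
        ← intervalIntegral.integral_neg]
      refine integral_mono_on hρ.1
        (hG.intervalIntegrable_comp hγ.1 (hsub ⟨le_rfl, hr₁r₀⟩) (hsub hρ)).neg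
        (((continuousOn_const.mul (continuousOn_const.sub hγ.1)).mono
          hρsub).intervalIntegrable_of_Icc hρ.1) fun r hr => ?_
      have hlow := hG.neg_mul_abs_sub_le (hρsub hr) (hGc r (hρsub hr)) (γ r)
      rw [abs_of_nonpos (sub_nonpos.2 (hbelow' r hr))] at hlow
      linarith
  exact hlt.ne (sub_eq_zero.1 (hzero ⟨hr₁r₀, le_rfl⟩)).symm

theorem eqOn_const_of_apply_eq (hG : IsCaratheodoryField t0 T G m L) {a b c : ℝ}
    (hGc : ∀ r ∈ Icc t0 T, 0 ≤ G r c) (hγ : IsCaratheodorySol t0 T G a c γ) (ha : a ∈ Icc t0 T)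
    (hb : b ∈ Icc a T) (hγb : γ b = c) : EqOn γ (fun _ => c) (Icc a b) := by
  have hsub : Icc a b ⊆ Icc t0 T := Icc_subset_Icc ha.1 hb.2
  have habove : ∀ r ∈ Icc a b, c ≤ γ r := fun r hr =>
    hγ.le_apply_of_nonneg hG hGc ha ⟨hr.1, hr.2.trans hb.2⟩
  have hγ' := hγb ▸ hγ.restart_s10 hG ha (hsub ⟨hb.1, le_rfl⟩)
  have hzero := eqOn_zero_of_le_mul_abs_integral (L := L) (g := fun r => γ r - c)
    ((hγ.1.sub continuousOn_const).mono hsub) (fun ρ hρ => sub_nonneg.2 (habove ρ hρ))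
    ⟨hb.1, le_rfl⟩ fun ρ hρ => by
      have hρsub : Icc ρ b ⊆ Icc t0 T := (Icc_subset_Icc_left hρ.1).trans hsub
      have habove' : ∀ r ∈ Icc ρ b, c ≤ γ r := fun r hr => habove r ⟨hρ.1.trans hr.1, hr.2⟩
      rw [integral_symm, abs_neg,
        abs_of_nonneg (integral_nonneg hρ.2 fun r hr => sub_nonneg.2 (habove' r hr)),
        ← intervalIntegral.integral_const_mul, hγ'.2 ρ (hsub hρ), add_sub_cancel_left,
        integral_symm, ← intervalIntegral.integral_neg]
      refine integral_mono_on hρ.2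
        (hG.intervalIntegrable_comp hγ.1 (hsub hρ) (hsub ⟨hb.1, le_rfl⟩)).neg
        (((continuousOn_const.mul (hγ.1.sub continuousOn_const)).mono
          hρsub).intervalIntegrable_of_Icc hρ.2) fun r hr => ?_
      have hlow := hG.neg_mul_abs_sub_le (hρsub hr) (hGc r (hρsub hr)) (γ r)
      rw [abs_of_nonneg (sub_nonneg.2 (habove' r hr))] at hlow
      linarith
  exact fun r hr => sub_eq_zero.1 (hzero hr)

theorem eq_of_apply_eq (hG : IsCaratheodoryField t0 T G m L) {c : ℝ}
    (hGc : ∀ r ∈ Icc t0 T, 0 < G r c) (hγ : IsCaratheodorySol t0 T G s x γ) (hs : s ∈ Icc t0 T)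
    {a b : ℝ} (ha : a ∈ Icc t0 T) (hb : b ∈ Icc t0 T) (hγa : γ a = c) (hγb : γ b = c) :
    a = b := by
  wlog hab : a ≤ b generalizing a b
  · exact (this hb ha hγb hγa (le_of_not_ge hab)).symm
  refine hab.eq_of_not_lt fun hlt => ?_
  have hγ' := hγa ▸ hγ.restart_s10 hG hs ha
  have hconst := hγ'.eqOn_const_of_apply_eq hG (fun r hr => (hGc r hr).le) ha ⟨hab, hb.2⟩ hγb
  have hpos : 0 < ∫ r in a..b, G r c :=
    intervalIntegral_pos_of_pos_on (hG.intervalIntegrable_comp continuousOn_const ha hb)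
      (fun r hr => hGc r ⟨ha.1.trans hr.1.le, hr.2.le.trans hb.2⟩) hlt
  have hgrowth : γ b = c + ∫ r in a..b, G r c := by
    rw [hγ'.2 b hb]
    congr 1
    exact integral_congr fun r hr => by
      simp only [hconst (uIcc_of_le hab ▸ hr : r ∈ Icc a b)]
  linarith

end IsCaratheodorySol

theorem entry_time_constant_along_characteristics_general
    (t0 T : ℝ) (G : ℝ → ℝ → ℝ)
    (hmeas : ∀ x : ℝ, Measurable fun t => G t x)
    (m : ℝ) (hbound : ∀ t ∈ Icc t0 T, ∀ x : ℝ, |G t x| ≤ m)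
    (L : ℝ)
    (hlip : ∀ t ∈ Icc t0 T, ∀ x y : ℝ, |G t x - G t y| ≤ L * |x - y|)
    (Φ : ℝ → ℝ → ℝ → ℝ)
    (hΦ : ∀ s ∈ Icc t0 T, ∀ x : ℝ, IsCaratheodorySol t0 T G s x (fun t => Φ t s x))
    (hG1 : ∀ r ∈ Icc t0 T, 0 < G r 1)
    (φ : ℝ → ℝ → ℝ)
    (hφ : ∀ t ∈ Icc t0 T, ∀ x : ℝ, 1 ≤ x → x ≤ Φ t t0 1 →
      φ t x ∈ Icc t0 t ∧ Φ (φ t x) t x = 1) :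
    ∀ t ∈ Icc t0 T, ∀ x : ℝ, 1 ≤ x → x ≤ Φ t t0 1 →
      ∀ σ ∈ Icc t0 T, 1 ≤ Φ σ t x → Φ σ t x ≤ Φ σ t0 1 →
        φ σ (Φ σ t x) = φ t x := by
  intro t ht x hx1 hxΦ σ hσ hy1 hyΦ
  have hG : IsCaratheodoryField t0 T G m L := ⟨hmeas, hbound, hlip⟩
  obtain ⟨hφσ, hΦφσ⟩ := hφ σ hσ _ hy1 hyΦ
  obtain ⟨hφt, hΦφt⟩ := hφ t ht x hx1 hxΦ
  have hφσ' : φ σ (Φ σ t x) ∈ Icc t0 T := ⟨hφσ.1, hφσ.2.trans hσ.2⟩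
  have hsame : EqOn (fun r => Φ r σ (Φ σ t x)) (fun r => Φ r t x) (Icc t0 T) :=
    (hΦ σ hσ _).eqOn hG ((hΦ t ht x).restart_s10 hG ht hσ) hσ
  exact (hΦ t ht x).eq_of_apply_eq hG hG1 ht hφσ' ⟨hφt.1, hφt.2.trans ht.2⟩
    ((hsame hφσ').symm.trans hΦφσ) hΦφt

/-- The entry time `φ` into the region `Ω₁ = {(t, x) : 1 ≤ x < Φ(t, t0, 1)}`
is constant along characteristic curves:
`φ(σ, Φ(σ, t, x)) = φ(t, x)`. -/
theorem entry_time_constant_along_characteristics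
    (t0 T : ℝ) (ht : t0 < T) (G : ℝ → ℝ → ℝ)
    (hmeas : ∀ x : ℝ, Measurable fun t => G t x)
    (m : ℝ) (hm : 0 ≤ m) (hbound : ∀ t ∈ Icc t0 T, ∀ x : ℝ, |G t x| ≤ m)
    (L : ℝ) (hL : 0 ≤ L)
    (hlip : ∀ t ∈ Icc t0 T, ∀ x y : ℝ, |G t x - G t y| ≤ L * |x - y|)
    (Φ : ℝ → ℝ → ℝ → ℝ)
    (hΦ : ∀ s ∈ Icc t0 T, ∀ x : ℝ, IsCaratheodorySol t0 T G s x (fun t => Φ t s x))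
    (hG1 : ∀ r ∈ Icc t0 T, 0 < G r 1)
    (φ : ℝ → ℝ → ℝ)
    (hφ : ∀ t ∈ Icc t0 T, ∀ x : ℝ, 1 ≤ x → x ≤ Φ t t0 1 →
      φ t x ∈ Icc t0 t ∧ Φ (φ t x) t x = 1) :
    ∀ t ∈ Icc t0 T, ∀ x : ℝ, 1 ≤ x → x ≤ Φ t t0 1 →
      ∀ σ ∈ Icc t0 T, 1 ≤ Φ σ t x → Φ σ t x ≤ Φ σ t0 1 →
        φ σ (Φ σ t x) = φ t x :=
  entry_time_constant_along_characteristics_general t0 T G hmeas m hbound L hlip Φ hΦ hG1 φ hφ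
end

section
/- Let t0 < T, 1 < b, let G : [t0,T] × [1,b] → ℝ be continuous with continuous partial derivative ∂_x G, let β : [1,b] → ℝ be continuous and f : [t0,T] → ℝ be continuous. Suppose u₁ and u₂ are continuously differentiable functions on [t0,T] × [1,b] each satisfying: (i) ∂_t u(t,x) + ∂_x (G(t,x)·u(t,x)) = 0 on [t0,T] × [1,b]; (ii) G(t,b)·u(t,b) = 0 for all t ∈ [t0,T]; (iii) G(t,1)·u(t,1) = ∫_1^b β(x)·u(t,x) dx + f(t) for all t ∈ [t0,T]; and suppose u₁(t0,x) = u₂(t0,x) for all x ∈ [1,b]. Then u₁ = u₂ on [t0,T] × [1,b]. -/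
/-!
Subtracting the two solutions reduces uniqueness to an L¹ a priori estimate: if `|β| ≤ K` and
`|f| ≤ M`, then `∫ |u t| ≤ gronwallBound (∫ |u t0|) K M (t - t0)`, which vanishes for the
difference. Since `|·|` is not differentiable, work with `φ_ε s = √(s² + ε²) - ε`. Multiplying the
equation by `φ_ε' u` and integrating in `x` gives
`d/dt ∫ φ_ε u = -∫ ∂ₓG (u φ_ε' u - φ_ε u) - [G φ_ε u]₁ᵇ`.
The integral is `O(ε)` because `0 ≤ s φ_ε' s - φ_ε s ≤ ε`; the boundary term vanishes at `b`, and
at `1` it is at most `|G u| = |∫ β u + f| ≤ K ∫ |u| + M`. Grönwall's inequality and `ε → 0` give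
the estimate.
-/

open MeasureTheory Set Filter Topology Function

noncomputable def smoothAbs (ε s : ℝ) : ℝ := √(s ^ 2 + ε ^ 2) - ε

noncomputable def smoothSign (ε s : ℝ) : ℝ := s / √(s ^ 2 + ε ^ 2)

section SmoothAbs

variable {ε : ℝ}

lemma hasDerivAt_smoothAbs (hε : 0 < ε) (s : ℝ) :
    HasDerivAt (smoothAbs ε) (smoothSign ε s) s := by
  have hq : s ^ 2 + ε ^ 2 ≠ 0 := by positivity
  refine ((((hasDerivAt_pow 2 s).add_const (ε ^ 2)).sqrt hq).sub_const ε).congr_deriv ?_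
  rw [smoothSign]
  field_simp
  norm_num

lemma continuous_smoothAbs : Continuous (smoothAbs ε) := by
  unfold smoothAbs
  fun_prop

lemma continuous_smoothSign (hε : 0 < ε) : Continuous (smoothSign ε) :=
  continuous_iff_continuousAt.2 fun s => by
    unfold smoothSign
    have : √(s ^ 2 + ε ^ 2) ≠ 0 := by positivity
    fun_prop (disch := assumption)

lemma smoothAbs_zero (hε : 0 ≤ ε) : smoothAbs ε 0 = 0 := by
  simp [smoothAbs, Real.sqrt_sq hε]

lemma abs_le_smoothAbs_add (ε s : ℝ) : |s| ≤ smoothAbs ε s + ε := by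
  rw [smoothAbs, sub_add_cancel, ← Real.sqrt_sq_eq_abs]
  exact Real.sqrt_le_sqrt (by nlinarith [sq_nonneg ε])

lemma abs_smoothAbs_le (hε : 0 ≤ ε) (s : ℝ) : |smoothAbs ε s| ≤ |s| := by
  have hε_le : ε ≤ √(s ^ 2 + ε ^ 2) := Real.le_sqrt_of_sq_le (by nlinarith [sq_nonneg s])
  have hle : √(s ^ 2 + ε ^ 2) ≤ |s| + ε := by
    rw [Real.sqrt_le_left (by positivity)]
    nlinarith [sq_abs s, abs_nonneg s]
  rw [abs_of_nonneg (by rw [smoothAbs]; linarith), smoothAbs]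
  linarith

lemma abs_mul_smoothSign_sub_smoothAbs_le (hε : 0 < ε) (s : ℝ) :
    |s * smoothSign ε s - smoothAbs ε s| ≤ ε := by
  have hq : 0 ≤ s ^ 2 + ε ^ 2 := by positivity
  have hr : 0 < √(s ^ 2 + ε ^ 2) := by positivity
  have hε_le : ε ≤ √(s ^ 2 + ε ^ 2) := Real.le_sqrt_of_sq_le (by nlinarith [sq_nonneg s])
  have key : s * smoothSign ε s - smoothAbs ε s = ε - ε ^ 2 / √(s ^ 2 + ε ^ 2) := by
    rw [smoothSign, smoothAbs]
    field_simp
    nlinarith [Real.sq_sqrt hq]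
  have hdiv : ε ^ 2 / √(s ^ 2 + ε ^ 2) ≤ ε := by
    rw [div_le_iff₀ hr]; nlinarith
  rw [key, abs_le]
  constructor <;> nlinarith [div_nonneg (sq_nonneg ε) hr.le]

end SmoothAbs

section PartialDeriv

variable {E : Type*} [NormedAddCommGroup E] [NormedSpace ℝ E] {u : ℝ → ℝ → E}

lemma differentiable_uncurry_left (hu : Differentiable ℝ (uncurry u)) (x : ℝ) :
    Differentiable ℝ fun τ => u τ x :=
  hu.comp (differentiable_id.prodMk (differentiable_const x))

lemma contDiff_uncurry_right {n : WithTop ℕ∞} (hu : ContDiff ℝ n (uncurry u)) (t : ℝ) :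
    ContDiff ℝ n (u t) :=
  hu.comp (contDiff_const.prodMk contDiff_id)

lemma continuous_deriv_uncurry_left (hu : ContDiff ℝ 1 (uncurry u)) :
    Continuous fun p : ℝ × ℝ => deriv (fun τ => u τ p.2) p.1 := by
  have hdiff : Differentiable ℝ (uncurry u) := hu.differentiable one_ne_zero
  have hderiv : ∀ p : ℝ × ℝ, deriv (fun τ => u τ p.2) p.1 = fderiv ℝ (uncurry u) p (1, 0) :=
    fun p => (((hdiff p).hasFDerivAt.comp_hasDerivAt (x := p.1) (f := fun τ => (τ, p.2))
      ((hasDerivAt_id p.1).prodMk (hasDerivAt_const p.1 p.2)))).deriv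
  simp only [hderiv]
  exact (hu.continuous_fderiv one_ne_zero).clm_apply continuous_const

end PartialDeriv

theorem hasDerivAt_intervalIntegral_of_continuous_uncurry
    {E : Type*} [NormedAddCommGroup E] [NormedSpace ℝ E] {F F' : ℝ → ℝ → E} (a b : ℝ)
    (hF : ∀ t, Continuous (F t)) (hF' : Continuous (uncurry F'))
    (hFF' : ∀ t x, HasDerivAt (fun τ => F τ x) (F' t x) t) (t₀ : ℝ) :
    HasDerivAt (fun t => ∫ x in a..b, F t x) (∫ x in a..b, F' t₀ x) t₀ := by
  obtain ⟨M, hM⟩ := (isCompact_closedBall t₀ 1 |>.prod isCompact_uIcc).exists_bound_of_continuousOn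
    hF'.continuousOn
  refine (intervalIntegral.hasDerivAt_integral_of_dominated_loc_of_deriv_le (bound := fun _ => M)
    (Metric.closedBall_mem_nhds t₀ one_pos) (.of_forall fun t => (hF t).aestronglyMeasurable)
    ((hF t₀).intervalIntegrable a b)
    (hF'.comp (continuous_const.prodMk continuous_id)).aestronglyMeasurable
    (.of_forall fun x hx t ht => hM (t, x) ⟨ht, uIoc_subset_uIcc hx⟩)
    intervalIntegrable_const (.of_forall fun x _ t _ => hFF' t x)).2

theorem integral_renormalization {g v r φ φ' : ℝ → ℝ} {a b : ℝ}
    (hg : ContDiff ℝ 1 g) (hv : ContDiff ℝ 1 v) (hφ : ∀ s, HasDerivAt φ (φ' s) s)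
    (hφ' : Continuous φ') (hr : ∀ x ∈ uIcc a b, r x + deriv (fun y => g y * v y) x = 0) :
    ∫ x in a..b, φ' (v x) * r x =
      -(∫ x in a..b, deriv g x * (v x * φ' (v x) - φ (v x))) - (g b * φ (v b) - g a * φ (v a)) := by
  obtain ⟨hg_diff, hg'⟩ := contDiff_one_iff_deriv.1 hg
  obtain ⟨hv_diff, hv'⟩ := contDiff_one_iff_deriv.1 hv
  have hφc : Continuous φ := continuous_iff_continuousAt.2 fun s => (hφ s).continuousAt
  have hflux : ∀ x, HasDerivAt (fun y => g y * φ (v y))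
      (deriv g x * φ (v x) + g x * (φ' (v x) * deriv v x)) x :=
    fun x => (hg_diff x).hasDerivAt.mul ((hφ (v x)).comp x (hv_diff x).hasDerivAt)
  have hsplit : EqOn (fun x => φ' (v x) * r x)
      (fun x => -(deriv g x * (v x * φ' (v x) - φ (v x)))
        - (deriv g x * φ (v x) + g x * (φ' (v x) * deriv v x))) (uIcc a b) := by
    intro x hx
    have hrx := hr x hx
    rw [deriv_fun_mul (hg_diff x) (hv_diff x)] at hrx
    linear_combination φ' (v x) * hrx
  have hsource : Continuous fun x => -(deriv g x * (v x * φ' (v x) - φ (v x))) := by fun_prop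
  have hflux_cont : Continuous fun x => deriv g x * φ (v x) + g x * (φ' (v x) * deriv v x) := by
    fun_prop
  rw [intervalIntegral.integral_congr hsplit,
    intervalIntegral.integral_sub (hsource.intervalIntegrable a b)
      (hflux_cont.intervalIntegrable a b),
    intervalIntegral.integral_neg,
    intervalIntegral.integral_eq_sub_of_hasDerivAt (fun x _ => hflux x)
      (hflux_cont.intervalIntegrable a b)]

lemma integral_abs_le_integral_smoothAbs_add {v : ℝ → ℝ} {a b : ℝ} (hv : Continuous v)
    (hab : a ≤ b) (ε : ℝ) :
    ∫ x in a..b, |v x| ≤ (∫ x in a..b, smoothAbs ε (v x)) + (b - a) * ε := by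
  have hφv : Continuous fun x => smoothAbs ε (v x) := continuous_smoothAbs.comp hv
  calc ∫ x in a..b, |v x| ≤ ∫ x in a..b, (smoothAbs ε (v x) + ε) :=
        intervalIntegral.integral_mono_on hab (hv.abs.intervalIntegrable a b)
          ((hφv.add continuous_const).intervalIntegrable a b)
          fun x _ => abs_le_smoothAbs_add ε (v x)
    _ = (∫ x in a..b, smoothAbs ε (v x)) + (b - a) * ε := by
        rw [intervalIntegral.integral_add (hφv.intervalIntegrable a b)
            (continuous_const.intervalIntegrable a b),
          intervalIntegral.integral_const, smul_eq_mul]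

lemma abs_integral_mul_le {β v : ℝ → ℝ} {a b K : ℝ} (hab : a ≤ b) (hv : Continuous v)
    (hβK : ∀ x ∈ Icc a b, |β x| ≤ K) :
    |∫ x in a..b, β x * v x| ≤ K * ∫ x in a..b, |v x| := by
  rw [← intervalIntegral.integral_const_mul, ← Real.norm_eq_abs]
  refine intervalIntegral.norm_integral_le_of_norm_le (μ := volume) hab (.of_forall fun x hx => ?_)
    ((continuous_const.mul hv.abs).intervalIntegrable a b)
  rw [Real.norm_eq_abs, abs_mul]
  exact mul_le_mul_of_nonneg_right (hβK x (Ioc_subset_Icc_self hx)) (abs_nonneg _)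

lemma eqOn_zero_of_integral_abs_nonpos {g : ℝ → ℝ} {a b : ℝ} (hab : a < b)
    (hg : Continuous g) (h : ∫ x in a..b, |g x| ≤ 0) : EqOn g 0 (Icc a b) := by
  intro x hx
  by_contra hgx
  exact h.not_gt (intervalIntegral.integral_pos hab hg.abs.continuousOn
    (fun x _ => abs_nonneg _) ⟨x, hx, abs_pos.2 hgx⟩)

structure IsTransportSolution (t0 T a b : ℝ) (G : ℝ → ℝ → ℝ) (β f : ℝ → ℝ)
    (u : ℝ → ℝ → ℝ) : Prop where
  contDiff : ContDiff ℝ 1 (uncurry u)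
  pde : ∀ t ∈ Icc t0 T, ∀ x ∈ Icc a b,
    deriv (fun τ => u τ x) t + deriv (fun y => G t y * u t y) x = 0
  flux_right : ∀ t ∈ Icc t0 T, G t b * u t b = 0
  flux_left : ∀ t ∈ Icc t0 T, G t a * u t a = (∫ x in a..b, β x * u t x) + f t

namespace IsTransportSolution

variable {t0 T a b : ℝ} {G : ℝ → ℝ → ℝ} {β f : ℝ → ℝ} {u u₁ u₂ : ℝ → ℝ → ℝ}

lemma continuous_right (hu : IsTransportSolution t0 T a b G β f u) (t : ℝ) : Continuous (u t) :=
  (contDiff_uncurry_right hu.contDiff t).continuous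

lemma sub (h₁ : IsTransportSolution t0 T a b G β f u₁) (h₂ : IsTransportSolution t0 T a b G β f u₂)
    (hG : ∀ t, Differentiable ℝ (G t)) (hβ : Continuous β) :
    IsTransportSolution t0 T a b G β 0 (u₁ - u₂) where
  contDiff := h₁.contDiff.sub h₂.contDiff
  pde t ht x hx := by
    have hdiff : ∀ u : ℝ → ℝ → ℝ, IsTransportSolution t0 T a b G β f u →
        DifferentiableAt ℝ (fun τ => u τ x) t ∧ DifferentiableAt ℝ (fun y => G t y * u t y) x :=
      fun u hu => ⟨differentiable_uncurry_left (hu.contDiff.differentiable one_ne_zero) x t,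
        (hG t x).mul ((contDiff_uncurry_right hu.contDiff t).differentiable one_ne_zero x)⟩
    obtain ⟨ht₁, hx₁⟩ := hdiff u₁ h₁
    obtain ⟨ht₂, hx₂⟩ := hdiff u₂ h₂
    simp only [Pi.sub_apply, mul_sub]
    rw [deriv_fun_sub ht₁ ht₂, deriv_fun_sub hx₁ hx₂]
    linear_combination h₁.pde t ht x hx - h₂.pde t ht x hx
  flux_right t ht := by
    simp only [Pi.sub_apply, mul_sub, h₁.flux_right t ht, h₂.flux_right t ht, sub_zero]
  flux_left t ht := by
    simp only [Pi.sub_apply, mul_sub, Pi.zero_apply, add_zero, h₁.flux_left t ht,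
      h₂.flux_left t ht]
    have hint : ∀ u, IsTransportSolution t0 T a b G β f u →
        IntervalIntegrable (fun x => β x * u t x) volume a b :=
      fun u hu => (hβ.mul (hu.continuous_right t)).intervalIntegrable a b
    rw [intervalIntegral.integral_sub (hint u₁ h₁) (hint u₂ h₂)]
    ring

lemma norm_mul_smoothAbs_left_le (hu : IsTransportSolution t0 T a b G β f u) (hab : a ≤ b)
    {K M ε : ℝ} (hβK : ∀ x ∈ Icc a b, |β x| ≤ K) (hfM : ∀ t ∈ Icc t0 T, |f t| ≤ M) (hε : 0 < ε)
    {t : ℝ} (ht : t ∈ Icc t0 T) :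
    ‖G t a * smoothAbs ε (u t a)‖ ≤
      K * ‖∫ x in a..b, smoothAbs ε (u t x)‖ + K * (b - a) * ε + M := by
  have hK_nonneg : 0 ≤ K := (abs_nonneg _).trans (hβK a ⟨le_rfl, hab⟩)
  have hv := hu.continuous_right t
  calc ‖G t a * smoothAbs ε (u t a)‖ ≤ |G t a * u t a| := by
        rw [Real.norm_eq_abs, abs_mul, abs_mul]
        exact mul_le_mul_of_nonneg_left (abs_smoothAbs_le hε.le _) (abs_nonneg _)
    _ ≤ |∫ x in a..b, β x * u t x| + |f t| := by
        rw [hu.flux_left t ht]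
        exact abs_add_le _ _
    _ ≤ K * ((∫ x in a..b, smoothAbs ε (u t x)) + (b - a) * ε) + M := by
        gcongr
        · exact (abs_integral_mul_le hab hv hβK).trans
            (mul_le_mul_of_nonneg_left (integral_abs_le_integral_smoothAbs_add hv hab ε)
              hK_nonneg)
        · exact hfM t ht
    _ ≤ K * ‖∫ x in a..b, smoothAbs ε (u t x)‖ + K * (b - a) * ε + M := by
        have := mul_le_mul_of_nonneg_left
          (Real.le_norm_self (∫ x in a..b, smoothAbs ε (u t x))) hK_nonneg
        linarith

lemma norm_integral_smoothSign_mul_deriv_le (hu : IsTransportSolution t0 T a b G β f u)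
    (hab : a ≤ b) (hG : ∀ t, ContDiff ℝ 1 (G t)) {K₁ K M ε : ℝ}
    (hK₁ : ∀ t ∈ Icc t0 T, ∀ x ∈ Icc a b, |deriv (G t) x| ≤ K₁)
    (hβK : ∀ x ∈ Icc a b, |β x| ≤ K) (hfM : ∀ t ∈ Icc t0 T, |f t| ≤ M) (hε : 0 < ε)
    {t : ℝ} (ht : t ∈ Icc t0 T) :
    ‖∫ x in a..b, smoothSign ε (u t x) * deriv (fun τ => u τ x) t‖ ≤
      K * ‖∫ x in a..b, smoothAbs ε (u t x)‖ + ((K₁ + K) * (b - a) * ε + M) := by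
  have hK₁_nonneg : 0 ≤ K₁ := (abs_nonneg _).trans (hK₁ t ht a ⟨le_rfl, hab⟩)
  rw [integral_renormalization (hG t) (contDiff_uncurry_right hu.contDiff t)
    (hasDerivAt_smoothAbs hε) (continuous_smoothSign hε)
    fun x hx => hu.pde t ht x (by rwa [uIcc_of_le hab] at hx)]
  have hright : G t b * smoothAbs ε (u t b) = 0 := by
    rcases mul_eq_zero.1 (hu.flux_right t ht) with h | h <;> simp [h, smoothAbs_zero hε.le]
  have hsource : ‖∫ x in a..b,
      deriv (G t) x * (u t x * smoothSign ε (u t x) - smoothAbs ε (u t x))‖ ≤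
        K₁ * ε * (b - a) := by
    refine (intervalIntegral.norm_integral_le_of_norm_le_const fun x hx => ?_).trans_eq
      (by rw [abs_of_nonneg (sub_nonneg.2 hab)])
    rw [uIoc_of_le hab] at hx
    rw [Real.norm_eq_abs, abs_mul]
    exact mul_le_mul (hK₁ t ht x (Ioc_subset_Icc_self hx))
      (abs_mul_smoothSign_sub_smoothAbs_le hε _) (abs_nonneg _) hK₁_nonneg
  rw [hright, zero_sub, sub_neg_eq_add]
  calc _ ≤ ‖∫ x in a..b,
        deriv (G t) x * (u t x * smoothSign ε (u t x) - smoothAbs ε (u t x))‖ +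
          ‖G t a * smoothAbs ε (u t a)‖ := (norm_add_le _ _).trans_eq (by rw [norm_neg])
    _ ≤ _ := by linarith [hu.norm_mul_smoothAbs_left_le hab hβK hfM hε ht]

lemma integral_abs_le_gronwallBound_add (hu : IsTransportSolution t0 T a b G β f u)
    (hab : a ≤ b) (hG : ∀ t, ContDiff ℝ 1 (G t)) {K₁ K M ε : ℝ}
    (hK₁ : ∀ t ∈ Icc t0 T, ∀ x ∈ Icc a b, |deriv (G t) x| ≤ K₁)
    (hβK : ∀ x ∈ Icc a b, |β x| ≤ K) (hfM : ∀ t ∈ Icc t0 T, |f t| ≤ M) (hε : 0 < ε)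
    {t : ℝ} (ht : t ∈ Icc t0 T) :
    ∫ x in a..b, |u t x| ≤
      gronwallBound (∫ x in a..b, |u t0 x|) K ((K₁ + K) * (b - a) * ε + M) (t - t0) +
        (b - a) * ε := by
  have hu_diff := hu.contDiff.differentiable one_ne_zero
  have hE : ∀ s, HasDerivAt (fun s => ∫ x in a..b, smoothAbs ε (u s x))
      (∫ x in a..b, smoothSign ε (u s x) * deriv (fun τ => u τ x) s) s :=
    hasDerivAt_intervalIntegral_of_continuous_uncurry a b
      (fun s => continuous_smoothAbs.comp (hu.continuous_right s))
      (((continuous_smoothSign hε).comp hu.contDiff.continuous).mul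
        (continuous_deriv_uncurry_left hu.contDiff))
      (fun s x => (hasDerivAt_smoothAbs hε (u s x)).comp (h := fun τ => u τ x) s
        (differentiable_uncurry_left hu_diff x s).hasDerivAt)
  have hE₀ : ‖∫ x in a..b, smoothAbs ε (u t0 x)‖ ≤ ∫ x in a..b, |u t0 x| :=
    intervalIntegral.norm_integral_le_of_norm_le hab
      (.of_forall fun x _ => abs_smoothAbs_le hε.le _)
      ((hu.continuous_right t0).abs.intervalIntegrable a b)
  have hgronwall := norm_le_gronwallBound_of_norm_deriv_right_le
    (fun s _ => (hE s).continuousAt.continuousWithinAt) (fun s _ => (hE s).hasDerivWithinAt) hE₀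
    (fun s hs => hu.norm_integral_smoothSign_mul_deriv_le hab hG hK₁ hβK hfM hε
      (Ico_subset_Icc_self hs)) t ht
  calc ∫ x in a..b, |u t x| ≤ (∫ x in a..b, smoothAbs ε (u t x)) + (b - a) * ε :=
        integral_abs_le_integral_smoothAbs_add (hu.continuous_right t) hab ε
    _ ≤ _ := by grw [← hgronwall, ← Real.le_norm_self]

theorem integral_abs_le_gronwallBound (hu : IsTransportSolution t0 T a b G β f u) (hab : a ≤ b)
    (hG : ∀ t, Differentiable ℝ (G t)) (hGx : Continuous fun p : ℝ × ℝ => deriv (G p.1) p.2)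
    {K M : ℝ} (hβK : ∀ x ∈ Icc a b, |β x| ≤ K) (hfM : ∀ t ∈ Icc t0 T, |f t| ≤ M) {t : ℝ}
    (ht : t ∈ Icc t0 T) :
    ∫ x in a..b, |u t x| ≤ gronwallBound (∫ x in a..b, |u t0 x|) K M (t - t0) := by
  have hGt : ∀ t, ContDiff ℝ 1 (G t) := fun t =>
    contDiff_one_iff_deriv.2 ⟨hG t, hGx.comp (continuous_const.prodMk continuous_id)⟩
  obtain ⟨K₁, hK₁⟩ := (isCompact_Icc.prod isCompact_Icc :
    IsCompact (Icc t0 T ×ˢ Icc a b)).exists_bound_of_continuousOn hGx.continuousOn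
  have hε_bound := fun ε (hε : 0 < ε) => hu.integral_abs_le_gronwallBound_add hab hGt
    (fun s hs x hx => Real.norm_eq_abs _ ▸ hK₁ (s, x) ⟨hs, hx⟩) hβK hfM hε ht
  have hlim : Tendsto (fun ε => gronwallBound (∫ x in a..b, |u t0 x|) K
      ((K₁ + K) * (b - a) * ε + M) (t - t0) + (b - a) * ε) (𝓝[>] 0)
      (𝓝 (gronwallBound (∫ x in a..b, |u t0 x|) K M (t - t0))) := by
    have hcont : Continuous fun ε => gronwallBound (∫ x in a..b, |u t0 x|) K
        ((K₁ + K) * (b - a) * ε + M) (t - t0) + (b - a) * ε :=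
      ((gronwallBound_continuous_ε _ K (t - t0)).comp (by fun_prop)).add (by fun_prop)
    exact (hcont.tendsto' 0 _ (by simp)).mono_left nhdsWithin_le_nhds
  exact ge_of_tendsto hlim (eventually_nhdsWithin_of_forall hε_bound)

end IsTransportSolution

theorem transport_uniqueness_general
    (t0 T b : ℝ) (hb : 1 < b)
    (G : ℝ → ℝ → ℝ)
    (hGdiff : ∀ t : ℝ, Differentiable ℝ (G t))
    (hGxcont : Continuous fun p : ℝ × ℝ => deriv (G p.1) p.2)
    (β : ℝ → ℝ) (hβ : Continuous β)
    (f : ℝ → ℝ)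
    (u₁ u₂ : ℝ → ℝ → ℝ)
    (hu₁ : ContDiff ℝ 1 (fun p : ℝ × ℝ => u₁ p.1 p.2))
    (hu₂ : ContDiff ℝ 1 (fun p : ℝ × ℝ => u₂ p.1 p.2))
    (hpde₁ : ∀ t ∈ Icc t0 T, ∀ x ∈ Icc (1:ℝ) b,
      deriv (fun τ => u₁ τ x) t + deriv (fun y => G t y * u₁ t y) x = 0)
    (hpde₂ : ∀ t ∈ Icc t0 T, ∀ x ∈ Icc (1:ℝ) b,
      deriv (fun τ => u₂ τ x) t + deriv (fun y => G t y * u₂ t y) x = 0)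
    (hbc_b₁ : ∀ t ∈ Icc t0 T, G t b * u₁ t b = 0)
    (hbc_b₂ : ∀ t ∈ Icc t0 T, G t b * u₂ t b = 0)
    (hbc_1₁ : ∀ t ∈ Icc t0 T,
      G t 1 * u₁ t 1 = (∫ x in (1:ℝ)..b, β x * u₁ t x) + f t)
    (hbc_1₂ : ∀ t ∈ Icc t0 T,
      G t 1 * u₂ t 1 = (∫ x in (1:ℝ)..b, β x * u₂ t x) + f t)
    (hinit : ∀ x ∈ Icc (1:ℝ) b, u₁ t0 x = u₂ t0 x) :
    ∀ t ∈ Icc t0 T, ∀ x ∈ Icc (1:ℝ) b, u₁ t x = u₂ t x := by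
  intro t ht
  have hw := (IsTransportSolution.mk hu₁ hpde₁ hbc_b₁ hbc_1₁).sub
    ⟨hu₂, hpde₂, hbc_b₂, hbc_1₂⟩ hGdiff hβ
  obtain ⟨K, hK⟩ := isCompact_Icc.exists_bound_of_continuousOn hβ.continuousOn
  have hL1 := hw.integral_abs_le_gronwallBound hb.le hGdiff hGxcont (M := 0)
    (fun x hx => Real.norm_eq_abs (β x) ▸ hK x hx) (by simp) ht
  have hw₀ : ∫ x in (1:ℝ)..b, |(u₁ - u₂) t0 x| = 0 := by
    rw [intervalIntegral.integral_congr (g := fun _ => 0) fun x hx => by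
      simp [hinit x (uIcc_of_le hb.le ▸ hx)]]
    simp
  rw [hw₀, gronwallBound_ε0_δ0] at hL1
  exact fun x hx =>
    sub_eq_zero.1 (eqOn_zero_of_integral_abs_nonpos hb (hw.continuous_right t) hL1 hx)

/-- Uniqueness for the metastatic transport model: two (continuously differentiable)
solutions of `∂ₜ u + ∂ₓ (G u) = 0` on `[t0, T] × [1, b]` with the zero-flux condition
at `x = b`, the nonlocal boundary condition
`G(t,1) u(t,1) = ∫_1^b β(x) u(t,x) dx + f(t)` at `x = 1`, and the same initial data
at `t = t0`, coincide on `[t0, T] × [1, b]`. -/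
theorem transport_uniqueness
    (t0 T b : ℝ) (ht : t0 < T) (hb : 1 < b)
    (G : ℝ → ℝ → ℝ)
    (hGcont : Continuous fun p : ℝ × ℝ => G p.1 p.2)
    (hGdiff : ∀ t : ℝ, Differentiable ℝ (G t))
    (hGxcont : Continuous fun p : ℝ × ℝ => deriv (G p.1) p.2)
    (β : ℝ → ℝ) (hβ : Continuous β)
    (f : ℝ → ℝ) (hf : Continuous f)
    (u₁ u₂ : ℝ → ℝ → ℝ)
    (hu₁ : ContDiff ℝ 1 (fun p : ℝ × ℝ => u₁ p.1 p.2))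
    (hu₂ : ContDiff ℝ 1 (fun p : ℝ × ℝ => u₂ p.1 p.2))
    (hpde₁ : ∀ t ∈ Icc t0 T, ∀ x ∈ Icc (1:ℝ) b,
      deriv (fun τ => u₁ τ x) t + deriv (fun y => G t y * u₁ t y) x = 0)
    (hpde₂ : ∀ t ∈ Icc t0 T, ∀ x ∈ Icc (1:ℝ) b,
      deriv (fun τ => u₂ τ x) t + deriv (fun y => G t y * u₂ t y) x = 0)
    (hbc_b₁ : ∀ t ∈ Icc t0 T, G t b * u₁ t b = 0)
    (hbc_b₂ : ∀ t ∈ Icc t0 T, G t b * u₂ t b = 0)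
    (hbc_1₁ : ∀ t ∈ Icc t0 T,
      G t 1 * u₁ t 1 = (∫ x in (1:ℝ)..b, β x * u₁ t x) + f t)
    (hbc_1₂ : ∀ t ∈ Icc t0 T,
      G t 1 * u₂ t 1 = (∫ x in (1:ℝ)..b, β x * u₂ t x) + f t)
    (hinit : ∀ x ∈ Icc (1:ℝ) b, u₁ t0 x = u₂ t0 x) :
    ∀ t ∈ Icc t0 T, ∀ x ∈ Icc (1:ℝ) b, u₁ t x = u₂ t x :=
  transport_uniqueness_general t0 T b hb G hGdiff hGxcont β hβ f u₁ u₂ hu₁ hu₂ hpde₁ hpde₂ hbc_b₁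
    hbc_b₂ hbc_1₁ hbc_1₂ hinit
end
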